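/- Type safety for a reference-allocation step: assume ⊢ σ₁ : Γ₁, that v₁ is a name value name(n) with n ∈ X, that Γ₁ ⊢ v₂ : A, that M(n) = p with p ∉ dom(σ₁), then with Γ₂ = (Γ₁, p : Ref p A) and σ₂ = (σ₁, p : v₂) we have ⊢ σ₂ : Γ₂, Γ₂ ⊢ ref p : Ref p A, and the write set {p} of this step satisfies {p} ⊆ M(X). -/

import Mathlib

namespace Stmt15

inductive Ty : Type
  | unit : Ty
  | nm   : Set ℕ → Ty                -- Nm[X]: names drawn from the set X
  | ref  : Set ℕ → Ty → Ty           -- Ref X A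

inductive Val : Type
  | unit : Val
  | name : ℕ → Val
  | ref  : ℕ → Val

abbrev Ctx := ℕ → Option Ty
abbrev Store := ℕ → Option Val

inductive HasTy : Ctx → Val → Ty → Prop
  | unit {Γ} : HasTy Γ .unit .unit
  | name {Γ n X} : n ∈ X → HasTy Γ (.name n) (.nm X)
  | ref {Γ p A} : Γ p = some (.ref {p} A) → HasTy Γ (.ref p) (.ref {p} A)

/-- ⊢ σ : Γ: domains agree, and each location p holds a value of the content
type A recorded by its binding p : Ref {p} A in Γ. -/
def StoreTy (σ : Store) (Γ : Ctx) : Prop :=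
  (∀ p, (σ p).isSome ↔ (Γ p).isSome) ∧
  (∀ p v, σ p = some v → ∃ A, Γ p = some (.ref {p} A) ∧ HasTy Γ v A)

theorem HasTy.mono {Γ Γ' : Ctx} (hΓ : ∀ q T, Γ q = some T → Γ' q = some T)
    {v : Val} {B : Ty} : HasTy Γ v B → HasTy Γ' v B
  | .unit => .unit
  | .name hn => .name hn
  | .ref hp => .ref (hΓ _ _ hp)

theorem HasTy.update_of_eq_none {Γ : Ctx} {p : ℕ} (hp : Γ p = none) (T : Ty)
    {v : Val} {B : Ty} (h : HasTy Γ v B) : HasTy (Function.update Γ p (some T)) v B :=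
  h.mono fun q U hq => by
    rwa [Function.update_of_ne (by rintro rfl; simp [hp] at hq)]

theorem StoreTy.ctx_eq_none {σ : Store} {Γ : Ctx} (hσ : StoreTy σ Γ) {p : ℕ}
    (hp : σ p = none) : Γ p = none := by
  simpa [hp] using (hσ.1 p).symm

theorem StoreTy.update_fresh {σ : Store} {Γ : Ctx} {p : ℕ} {v : Val} {A : Ty}
    (hσ : StoreTy σ Γ) (hp : σ p = none) (hv : HasTy Γ v A) :
    StoreTy (Function.update σ p (some v)) (Function.update Γ p (some (.ref {p} A))) := by
  have weaken := @HasTy.update_of_eq_none Γ p (hσ.ctx_eq_none hp) (.ref {p} A)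
  refine ⟨fun q => ?_, fun q w hqw => ?_⟩
  · rcases eq_or_ne q p with rfl | hq
    · simp
    · simpa only [Function.update_of_ne hq] using hσ.1 q
  · rcases eq_or_ne q p with rfl | hq
    · obtain rfl : v = w := by simpa using hqw
      exact ⟨A, by simp, weaken hv⟩
    · rw [Function.update_of_ne hq] at hqw ⊢
      obtain ⟨B, hB, hw⟩ := hσ.2 q w hqw
      exact ⟨B, hB, weaken hw⟩

theorem ref_allocation_general (σ₁ : Store) (Γ₁ : Ctx) (v₂ : Val) (A : Ty)
    (X : Set ℕ) (M : ℕ → ℕ) (n p : ℕ)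
    (hσ : StoreTy σ₁ Γ₁)
    (hn : n ∈ X)
    (hv₂ : HasTy Γ₁ v₂ A)
    (hM : M n = p) (hfresh : σ₁ p = none) :
    StoreTy (Function.update σ₁ p (some v₂))
        (Function.update Γ₁ p (some (.ref {p} A))) ∧
    HasTy (Function.update Γ₁ p (some (.ref {p} A))) (.ref p) (.ref {p} A) ∧
    ({p} : Set ℕ) ⊆ M '' X :=
  ⟨hσ.update_fresh hfresh hv₂, .ref (Function.update_self ..),
    Set.singleton_subset_iff.2 ⟨n, hn, hM⟩⟩

/-- Type safety for a reference-allocation step. -/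
theorem ref_allocation (σ₁ : Store) (Γ₁ : Ctx) (v₁ v₂ : Val) (A : Ty)
    (X : Set ℕ) (M : ℕ → ℕ) (n p : ℕ)
    (hσ : StoreTy σ₁ Γ₁)
    (hv₁ : v₁ = .name n) (hn : n ∈ X)
    (hv₂ : HasTy Γ₁ v₂ A)
    (hM : M n = p) (hfresh : σ₁ p = none) :
    StoreTy (Function.update σ₁ p (some v₂))
        (Function.update Γ₁ p (some (.ref {p} A))) ∧
    HasTy (Function.update Γ₁ p (some (.ref {p} A))) (.ref p) (.ref {p} A) ∧
    ({p} : Set ℕ) ⊆ M '' X :=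
  ref_allocation_general σ₁ Γ₁ v₂ A X M n p hσ hn hv₂ hM hfresh

end Stmt15
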